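/- Under the coupled-dynamics setup, for every Δt ∈ ℕ such that ε_A(Δt) < 1 − ‖A'_{t₀}‖, the maximum deviation in b satisfies the forward bound ε_b(Δt + 1) ≤ ε_A(Δt) · b_max / (1 − ‖A'_{t₀}‖ − ε_A(Δt)). -/

import Mathlib

open Matrix Finset

/-- The spectral norm (ℓ²-operator norm) of a real square matrix. -/
noncomputable def specNorm {n : ℕ} (A : Matrix (Fin n) (Fin n) ℝ) : ℝ :=
  ‖Matrix.toEuclideanCLM (𝕜 := ℝ) A‖

/-- The Euclidean norm of a real vector. -/
noncomputable def evNorm {n : ℕ} (v : Fin n → ℝ) : ℝ :=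
  Real.sqrt (∑ i, v i ^ 2)

/-- `ε_A(Δt) = max_{t₀ ≤ τ ≤ t₀+Δt} ‖A_τ − A'_{t₀}‖` (spectral norm). -/
noncomputable def epsA {n : ℕ} (t₀ : ℕ)
    (A A' : ℕ → Matrix (Fin n) (Fin n) ℝ) (Δt : ℕ) : ℝ :=
  (Finset.Icc t₀ (t₀ + Δt)).sup'
    (Finset.nonempty_Icc.mpr (Nat.le_add_right _ _))
    (fun τ => specNorm (A τ - A' t₀))

/-- `ε_b(Δt) = max_{t₀ ≤ τ ≤ t₀+Δt} ‖b_τ − b'_τ‖` (Euclidean norm). -/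
noncomputable def epsB {n : ℕ} (t₀ : ℕ)
    (b b' : ℕ → (Fin n → ℝ)) (Δt : ℕ) : ℝ :=
  (Finset.Icc t₀ (t₀ + Δt)).sup'
    (Finset.nonempty_Icc.mpr (Nat.le_add_right _ _))
    (fun τ => evNorm (b τ - b' τ))

/-!
Write `e_τ = b_τ - b'_τ`, `a = ‖A'_{t₀}‖` and `ε = ε_A(Δt)`. Since both recursions subtract the
same noise, `e_{τ+1} = A'_{t₀} e_τ + (A_τ - A'_{t₀}) b_τ`, and `‖b_τ‖ ≤ b_max + ‖e_τ‖`, so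
`‖e_{τ+1}‖ ≤ (a + ε) ‖e_τ‖ + ε b_max`. Starting from `e_{t₀} = 0`, this affine contraction
never leaves `[0, ε b_max / (1 - a - ε)]`, the interval bounded by its fixed point.
-/

open WithLp

theorem forall_le_div_one_sub_of_le_mul_add {u : ℕ → ℝ} {r c : ℝ} {N : ℕ}
    (hr₀ : 0 ≤ r) (hr₁ : r < 1) (h₀ : u 0 ≤ c / (1 - r))
    (hstep : ∀ k < N, u (k + 1) ≤ r * u k + c) :
    ∀ k ≤ N, u k ≤ c / (1 - r) := by
  intro k
  induction k with
  | zero => exact fun _ => h₀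
  | succ k ih =>
    intro hk
    have hr : 1 - r ≠ 0 := (sub_pos.mpr hr₁).ne'
    calc u (k + 1) ≤ r * u k + c := hstep k hk
      _ ≤ r * (c / (1 - r)) + c := by gcongr; exact ih (by omega)
      _ = c / (1 - r) := by field_simp; ring

section Norms

variable {n : ℕ}

theorem evNorm_eq_norm_toLp (v : Fin n → ℝ) : evNorm v = ‖toLp 2 v‖ := by
  simp only [evNorm, EuclideanSpace.norm_eq, Real.norm_eq_abs, sq_abs]

theorem evNorm_nonneg (v : Fin n → ℝ) : 0 ≤ evNorm v := Real.sqrt_nonneg _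

@[simp]
theorem evNorm_zero : evNorm (0 : Fin n → ℝ) = 0 := by simp [evNorm]

theorem evNorm_add_le (u v : Fin n → ℝ) : evNorm (u + v) ≤ evNorm u + evNorm v := by
  simp only [evNorm_eq_norm_toLp, toLp_add]
  exact norm_add_le _ _

theorem specNorm_nonneg (A : Matrix (Fin n) (Fin n) ℝ) : 0 ≤ specNorm A := norm_nonneg _

theorem evNorm_mulVec_le (A : Matrix (Fin n) (Fin n) ℝ) (v : Fin n → ℝ) :
    evNorm (A *ᵥ v) ≤ specNorm A * evNorm v := by
  simp only [evNorm_eq_norm_toLp, specNorm, ← Matrix.toEuclideanCLM_toLp]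
  exact ContinuousLinearMap.le_opNorm _ _

theorem evNorm_mulVec_sub_mulVec_le (A A₀ : Matrix (Fin n) (Fin n) ℝ) (x y : Fin n → ℝ) :
    evNorm (A *ᵥ x - A₀ *ᵥ y) ≤
      specNorm A₀ * evNorm (x - y) + specNorm (A - A₀) * (evNorm y + evNorm (x - y)) := by
  have hsplit : A *ᵥ x - A₀ *ᵥ y = A₀ *ᵥ (x - y) + (A - A₀) *ᵥ x := by
    rw [Matrix.mulVec_sub, Matrix.sub_mulVec]; abel
  have hx : evNorm x ≤ evNorm y + evNorm (x - y) := by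
    simpa using evNorm_add_le y (x - y)
  calc evNorm (A *ᵥ x - A₀ *ᵥ y)
      ≤ evNorm (A₀ *ᵥ (x - y)) + evNorm ((A - A₀) *ᵥ x) := hsplit ▸ evNorm_add_le _ _
    _ ≤ specNorm A₀ * evNorm (x - y) + specNorm (A - A₀) * evNorm x :=
        add_le_add (evNorm_mulVec_le _ _) (evNorm_mulVec_le _ _)
    _ ≤ specNorm A₀ * evNorm (x - y) + specNorm (A - A₀) * (evNorm y + evNorm (x - y)) := by
        gcongr; exact specNorm_nonneg _

end Norms

section Deviations

variable {n : ℕ} (t₀ : ℕ)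

theorem specNorm_sub_le_epsA (A A' : ℕ → Matrix (Fin n) (Fin n) ℝ) {Δt τ : ℕ}
    (h₁ : t₀ ≤ τ) (h₂ : τ ≤ t₀ + Δt) : specNorm (A τ - A' t₀) ≤ epsA t₀ A A' Δt :=
  Finset.le_sup' (fun τ => specNorm (A τ - A' t₀)) (Finset.mem_Icc.mpr ⟨h₁, h₂⟩)

theorem epsA_nonneg (A A' : ℕ → Matrix (Fin n) (Fin n) ℝ) (Δt : ℕ) : 0 ≤ epsA t₀ A A' Δt :=
  (specNorm_nonneg _).trans (specNorm_sub_le_epsA t₀ A A' le_rfl (Nat.le_add_right _ _))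

theorem epsB_le_of_forall_le (b b' : ℕ → (Fin n → ℝ)) {Δt : ℕ} {M : ℝ}
    (h : ∀ k ≤ Δt, evNorm (b (t₀ + k) - b' (t₀ + k)) ≤ M) : epsB t₀ b b' Δt ≤ M := by
  refine Finset.sup'_le _ _ fun τ hτ => ?_
  obtain ⟨hτ₁, hτ₂⟩ := Finset.mem_Icc.mp hτ
  obtain ⟨k, rfl⟩ := Nat.exists_eq_add_of_le hτ₁
  exact h k (by omega)

end Deviations

theorem lodo_forward_bound_general
    (n : ℕ) (t₀ : ℕ) (s : ℕ → (Fin n → ℝ))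
    (bmax : ℝ)
    (A A' : ℕ → Matrix (Fin n) (Fin n) ℝ) (b b' : ℕ → (Fin n → ℝ))
    (hb0 : b t₀ = 0)
    (hbrec : ∀ t, t₀ ≤ t → b (t + 1) = A t *ᵥ b t - s t)
    (hb'0 : b' t₀ = 0)
    (hb'rec : ∀ t, t₀ ≤ t → b' (t + 1) = A' t₀ *ᵥ b' t - s t)
    (hb'bound : ∀ t, t₀ ≤ t → evNorm (b' t) ≤ bmax) :
    ∀ Δt : ℕ, epsA t₀ A A' Δt < 1 - specNorm (A' t₀) →
      epsB t₀ b b' (Δt + 1) ≤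
        epsA t₀ A A' Δt * bmax / (1 - specNorm (A' t₀) - epsA t₀ A A' Δt) := by
  intro Δt hΔt
  set a := specNorm (A' t₀)
  set ε := epsA t₀ A A' Δt
  have hε : 0 ≤ ε := epsA_nonneg t₀ A A' Δt
  have hbmax : 0 ≤ bmax := (evNorm_nonneg _).trans (hb'bound t₀ le_rfl)
  have hstep : ∀ k < Δt + 1, evNorm (b (t₀ + (k + 1)) - b' (t₀ + (k + 1))) ≤
      (a + ε) * evNorm (b (t₀ + k) - b' (t₀ + k)) + ε * bmax := by
    intro k hk
    have hεk : specNorm (A (t₀ + k) - A' t₀) ≤ ε :=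
      specNorm_sub_le_epsA t₀ A A' le_self_add (by omega)
    have hb' := hb'bound (t₀ + k) le_self_add
    have hdev := evNorm_mulVec_sub_mulVec_le (A (t₀ + k)) (A' t₀) (b (t₀ + k)) (b' (t₀ + k))
    rw [← add_assoc, hbrec _ le_self_add, hb'rec _ le_self_add, sub_sub_sub_cancel_right]
    nlinarith [evNorm_nonneg (b (t₀ + k) - b' (t₀ + k)), evNorm_nonneg (b' (t₀ + k))]
  rw [sub_sub]
  refine epsB_le_of_forall_le t₀ b b' <|
    forall_le_div_one_sub_of_le_mul_add (u := fun k => evNorm (b (t₀ + k) - b' (t₀ + k)))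
      (add_nonneg (specNorm_nonneg _) hε) (by linarith) ?_ hstep
  simp only [add_zero, hb0, hb'0, sub_self, evNorm_zero]
  exact div_nonneg (by positivity) (by linarith)

/-- Forward bound: the maximum deviation in `b` is controlled by the
maximum drift of `A`. -/
theorem lodo_forward_bound
    (n : ℕ) (hn : 1 ≤ n) (t₀ : ℕ) (α : ℝ) (hα : 0 < α)
    (H : Matrix (Fin n) (Fin n) ℝ) (s : ℕ → (Fin n → ℝ))
    (bmax : ℝ) (hbmax : 0 < bmax)
    (A A' : ℕ → Matrix (Fin n) (Fin n) ℝ) (b b' : ℕ → (Fin n → ℝ))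
    (hb0 : b t₀ = 0)
    (hbrec : ∀ t, t₀ ≤ t → b (t + 1) = A t *ᵥ b t - s t)
    (hArec : ∀ t, t₀ ≤ t →
      A (t + 1) = A t - α • (H * vecMulVec (b (t + 1)) (b t) * H ^ 2))
    (hA'0 : A' t₀ = A t₀) (hb'0 : b' t₀ = 0)
    (hb'rec : ∀ t, t₀ ≤ t → b' (t + 1) = A' t₀ *ᵥ b' t - s t)
    (hA'rec : ∀ t, t₀ ≤ t →
      A' (t + 1) = A' t - α • (H * vecMulVec (b' (t + 1)) (b' t) * H ^ 2))
    (hAnorm : specNorm (A' t₀) < 1)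
    (hb'bound : ∀ t, t₀ ≤ t → evNorm (b' t) ≤ bmax) :
    ∀ Δt : ℕ, epsA t₀ A A' Δt < 1 - specNorm (A' t₀) →
      epsB t₀ b b' (Δt + 1) ≤
        epsA t₀ A A' Δt * bmax / (1 - specNorm (A' t₀) - epsA t₀ A A' Δt) :=
  lodo_forward_bound_general n t₀ s bmax A A' b b' hb0 hbrec hb'0 hb'rec hb'bound
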